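/- Let k be a field of characteristic p > 2 and let μ₁,…,μ_s ∈ k be linearly independent over 𝔽_p. Let (Z/p)^s act on k[X,Y] with the i-th generator g_i acting by g_i(Y)=Y, g_i(X)=X-μ_iY. Then the ring of invariants k[X,Y]^{(Z/p)^s} equals k[φ,Y], where φ = ∏_{(a₁,…,a_s)∈𝔽_p^s} (X + (a₁μ₁+⋯+a_sμ_s)Y). -/

import Mathlib

/-!
Write `k[X,Y] = k[Y][X]`. The generators then act by the translations `X ↦ X + t` with `t` in
the finite group `{λ(a) Y}`, where `λ(a) = ∑ aᵢ μᵢ` is injective by the linear independence of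
the `μᵢ`. The orbit product `φ = ∏ₐ (X + λ(a) Y)` is monic and translation invariant, so by
uniqueness of division with remainder an invariant `f` has invariant quotient and remainder
modulo `φ`. The remainder has degree `< p^s` in `X` and takes the same value at the `p^s` distinct
points `λ(a) Y`, so it lies in `k[Y]`; induction on the degree gives `f ∈ k[Y][φ] = k[φ, Y]`.
-/

section
open MvPolynomial

/-- The `k`-algebra automorphism of `k[X,Y]` determined by `X ↦ X - cY`, `Y ↦ Y`
(we write `X = X 0`, `Y = X 1`). -/
noncomputable def substAct (k : Type*) [CommRing k] (c : k) :
    MvPolynomial (Fin 2) k →ₐ[k] MvPolynomial (Fin 2) k :=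
  aeval (fun j => if j = 0 then X 0 - C c * X 1 else X 1)

end

theorem Subalgebra.apply_mem_map_algEquiv_iff {R A B : Type*} [CommSemiring R] [Semiring A]
    [Semiring B] [Algebra R A] [Algebra R B] (e : A ≃ₐ[R] B) {S : Subalgebra R A} {x : A} :
    e x ∈ S.map (e : A →ₐ[R] B) ↔ x ∈ S := by
  simp [Subalgebra.mem_map]

namespace Polynomial

theorem restrictScalars_adjoin_eq_adjoin_insert {k A : Type*} [CommSemiring k]
    [CommSemiring A] [Algebra k A] [Algebra k[X] A] [IsScalarTower k k[X] A] (s : Set A) :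
    (Algebra.adjoin k[X] s).restrictScalars k =
      Algebra.adjoin k (insert (algebraMap k[X] A X) s) := by
  rw [Algebra.adjoin_eq_adjoin_union k {X} s (Polynomial.adjoin_X), Set.image_singleton,
    Set.singleton_union]

section CommRing

variable {R : Type*} [CommRing R]

def translationStabilizer (f : R[X]) : AddSubgroup R where
  carrier := {t | taylor t f = f}
  zero_mem' := taylor_zero f
  add_mem' {s t} (hs : taylor s f = f) (ht : taylor t f = f) :=
    show taylor (s + t) f = f by rw [← taylor_taylor, ht, hs]
  neg_mem' {t} (ht : taylor t f = f) :=
    show taylor (-t) f = f by conv_lhs => rw [← ht, taylor_taylor, neg_add_cancel, taylor_zero]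

@[simp]
theorem mem_translationStabilizer {f : R[X]} {t : R} :
    t ∈ translationStabilizer f ↔ taylor t f = f :=
  Iff.rfl

theorem taylor_divByMonic_modByMonic [Nontrivial R] (t : R) {g : R[X]} (hg : g.Monic)
    (f : R[X]) :
    taylor t f /ₘ taylor t g = taylor t (f /ₘ g) ∧ taylor t f %ₘ taylor t g = taylor t (f %ₘ g) :=
  div_modByMonic_unique _ _ (by rw [Monic, leadingCoeff_taylor]; exact hg)
    ⟨by rw [← taylor_mul, ← map_add, modByMonic_add_div],
      by rw [degree_taylor, degree_taylor]; exact degree_modByMonic_lt f hg⟩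

variable {G : Type*} [AddCommGroup G] [Fintype G]

noncomputable def orbitProd (m : G →+ R) : R[X] :=
  ∏ a, (X + C (m a))

theorem monic_orbitProd (m : G →+ R) : (orbitProd m).Monic :=
  monic_prod_of_monic _ _ fun a _ => monic_X_add_C (m a)

theorem natDegree_orbitProd [Nontrivial R] (m : G →+ R) :
    (orbitProd m).natDegree = Fintype.card G := by
  rw [orbitProd, natDegree_prod_of_monic _ _ fun a _ => monic_X_add_C (m a)]
  simp

theorem taylor_orbitProd (m : G →+ R) (b : G) : taylor (m b) (orbitProd m) = orbitProd m := by
  rw [orbitProd, taylor_apply, prod_comp]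
  refine Fintype.prod_equiv (Equiv.addRight b) _ _ fun a => ?_
  simp only [Equiv.coe_addRight, map_add, add_comp, X_comp, C_comp]
  ring

end CommRing

section IsDomain

variable {R : Type*} [CommRing R] [IsDomain R]

theorem eq_C_eval_zero_of_taylor_eq {ι : Type*} [Fintype ι] {m : ι → R}
    (hm : Function.Injective m) {r : R[X]} (hr : ∀ a, taylor (m a) r = r)
    (hdeg : r.natDegree < Fintype.card ι) :
    r = C (r.eval 0) := by
  refine sub_eq_zero.1 (eq_zero_of_natDegree_lt_card_of_eval_eq_zero _ hm (fun a => ?_) ?_)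
  · have h := congrArg (eval 0) (hr a)
    rw [taylor_eval, zero_add] at h
    rw [eval_sub, eval_C, h, sub_self]
  · exact (natDegree_sub_le _ _).trans_lt (by simpa using hdeg)

theorem mem_adjoin_orbitProd_iff {G : Type*} [AddCommGroup G] [Fintype G] {m : G →+ R}
    (hm : Function.Injective m) {f : R[X]} :
    f ∈ Algebra.adjoin R {orbitProd m} ↔ ∀ a, taylor (m a) f = f := by
  set Ψ := orbitProd m
  constructor
  · intro hf a
    suffices Algebra.adjoin R {Ψ} ≤ AlgHom.equalizer (taylorAlgHom (m a)) (AlgHom.id R R[X]) from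
      this hf
    exact Algebra.adjoin_le (by simpa using taylor_orbitProd m a)
  · induction f using degree_lt_wf.induction with
    | _ f ih =>
    intro hf
    obtain ⟨hq, hr⟩ :
        (∀ a, taylor (m a) (f /ₘ Ψ) = f /ₘ Ψ) ∧ ∀ a, taylor (m a) (f %ₘ Ψ) = f %ₘ Ψ :=
      forall_and.1 fun a => by
        simpa [hf a, taylor_orbitProd, eq_comm] using
          taylor_divByMonic_modByMonic (m a) (monic_orbitProd m) f
    have hΨ : 0 < Ψ.natDegree := natDegree_orbitProd m ▸ Fintype.card_pos
    have hr_const : f %ₘ Ψ = C ((f %ₘ Ψ).eval 0) :=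
      eq_C_eval_zero_of_taylor_eq hm hr <| natDegree_orbitProd m ▸
        natDegree_modByMonic_lt f (monic_orbitProd m) fun h => by simp [h] at hΨ
    rcases eq_or_ne f 0 with rfl | hf0
    · exact zero_mem _
    rw [← modByMonic_add_div f Ψ, hr_const, ← algebraMap_eq]
    refine add_mem (Subalgebra.algebraMap_mem _ _)
      (mul_mem (Algebra.subset_adjoin rfl) (ih _ ?_ hq))
    exact degree_divByMonic_lt f Ψ hf0 (natDegree_pos_iff_degree_pos.1 hΨ)

end IsDomain

end Polynomial

section Bivariate

open Polynomial

variable (k : Type*) [CommRing k]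

noncomputable def polyOverYEquiv : MvPolynomial (Fin 2) k ≃ₐ[k] k[X][X] :=
  (MvPolynomial.renameEquiv k (Equiv.swap 0 1)).trans (Bivariate.equivMvPolynomial k).symm

@[simp]
theorem polyOverYEquiv_X_zero : polyOverYEquiv k (MvPolynomial.X 0) = X := by
  simp [polyOverYEquiv]

@[simp]
theorem polyOverYEquiv_X_one : polyOverYEquiv k (MvPolynomial.X 1) = C X := by
  simp [polyOverYEquiv]

@[simp]
theorem polyOverYEquiv_C (a : k) : polyOverYEquiv k (MvPolynomial.C a) = C (C a) := by
  simp [polyOverYEquiv]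

theorem polyOverYEquiv_substAct (c : k) (f : MvPolynomial (Fin 2) k) :
    polyOverYEquiv k (substAct k c f) = taylor (-(C c * X)) (polyOverYEquiv k f) := by
  suffices (polyOverYEquiv k : _ →ₐ[k] k[X][X]).comp (substAct k c) =
      ((taylorAlgHom (-(C c * X))).restrictScalars k).comp (polyOverYEquiv k) from
    DFunLike.congr_fun this f
  refine MvPolynomial.algHom_ext fun j => ?_
  fin_cases j <;> simp [substAct, sub_eq_add_neg]

theorem substAct_eq_self_iff {c : k} {f : MvPolynomial (Fin 2) k} :
    substAct k c f = f ↔ C c * X ∈ translationStabilizer (polyOverYEquiv k f) := by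
  rw [← neg_mem_iff, mem_translationStabilizer, ← polyOverYEquiv_substAct,
    (polyOverYEquiv k).injective.eq_iff]

end Bivariate

section ZModCombination

variable {p : ℕ} {k : Type*} [CommRing k] [CharP k p] {ι : Type*} [Fintype ι]

noncomputable def zmodCombination (μ : ι → k) : (ι → ZMod p) →+ k where
  toFun a := ∑ i, ZMod.castHom (dvd_refl p) k (a i) * μ i
  map_zero' := by simp
  map_add' a b := by simp [add_mul, Finset.sum_add_distrib]

theorem zmodCombination_apply (μ : ι → k) (a : ι → ZMod p) :
    zmodCombination μ a = ∑ i, ZMod.castHom (dvd_refl p) k (a i) * μ i :=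
  rfl

theorem forall_zmodCombination_mem_iff [NeZero p] [DecidableEq ι] {μ : ι → k}
    {H : AddSubgroup k} : (∀ a, zmodCombination (p := p) μ a ∈ H) ↔ ∀ i, μ i ∈ H := by
  refine ⟨fun h i => ?_, fun h a => H.sum_mem fun i _ => ?_⟩
  · simpa [zmodCombination_apply, Pi.single_apply] using h (Pi.single i 1)
  · rw [ZMod.castHom_apply, ← ZMod.natCast_val, ← nsmul_eq_mul]
    exact H.nsmul_mem (h i) _

end ZModCombination

section Invariants

open Polynomial

variable {p : ℕ} {k : Type*} [CommRing k] [CharP k p] {ι : Type*} [Fintype ι]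

noncomputable def translationHom (μ : ι → k) : (ι → ZMod p) →+ k[X] :=
  (AddMonoidHom.mulRight X).comp ((C : k →+* k[X]).toAddMonoidHom.comp (zmodCombination μ))

theorem translationHom_injective {μ : ι → k}
    (hμ : Function.Injective (zmodCombination (p := p) μ)) :
    Function.Injective (translationHom (p := p) μ) :=
  isRegular_X.right.comp (C_injective.comp hμ)

theorem polyOverYEquiv_prod [NeZero p] [DecidableEq ι] (μ : ι → k) :
    polyOverYEquiv k (∏ a : ι → ZMod p, (MvPolynomial.X 0 +
        MvPolynomial.C (∑ i, ZMod.castHom (dvd_refl p) k (a i) * μ i) * MvPolynomial.X 1)) =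
      orbitProd (translationHom μ) := by
  simp [map_prod, orbitProd, translationHom, zmodCombination_apply]

theorem forall_substAct_eq_self_iff [NeZero p] [DecidableEq ι] {μ : ι → k}
    {f : MvPolynomial (Fin 2) k} :
    (∀ i, substAct k (μ i) f = f) ↔
      ∀ a, taylor (translationHom (p := p) μ a) (polyOverYEquiv k f) = polyOverYEquiv k f := by
  simp_rw [substAct_eq_self_iff]
  exact (forall_zmodCombination_mem_iff (H := (translationStabilizer (polyOverYEquiv k f)).comap
    ((AddMonoidHom.mulRight X).comp (C : k →+* k[X]).toAddMonoidHom))).symm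

end Invariants

open MvPolynomial

theorem invariants_Zps_general (p : ℕ) [Fact p.Prime]
    (k : Type*) [Field k] [CharP k p] (s : ℕ) (μ : Fin s → k)
    (hμ : ∀ c : Fin s → ZMod p,
      ∑ i, ZMod.castHom (dvd_refl p) k (c i) * μ i = 0 → c = 0) :
    (⨅ i : Fin s, AlgHom.equalizer (substAct k (μ i))
        (AlgHom.id k (MvPolynomial (Fin 2) k))) =
      Algebra.adjoin k
        {∏ a : Fin s → ZMod p,
            (X 0 + C (∑ i, ZMod.castHom (dvd_refl p) k (a i) * μ i) * X 1),
         (X 1 : MvPolynomial (Fin 2) k)} := by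
  have hinj : Function.Injective (zmodCombination (p := p) μ) :=
    (injective_iff_map_eq_zero _).2 hμ
  ext f
  rw [Algebra.mem_iInf, ← Subalgebra.apply_mem_map_algEquiv_iff (polyOverYEquiv k),
    ← Algebra.adjoin_image, Set.image_pair, AlgEquiv.coe_toAlgHom,
    polyOverYEquiv_prod, polyOverYEquiv_X_one, ← Polynomial.algebraMap_eq, Set.pair_comm,
    ← Polynomial.restrictScalars_adjoin_eq_adjoin_insert, Subalgebra.mem_restrictScalars,
    Polynomial.mem_adjoin_orbitProd_iff (translationHom_injective hinj),
    ← forall_substAct_eq_self_iff]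
  simp only [AlgHom.mem_equalizer, AlgHom.id_apply]

/-- Let `k` be a field of characteristic `p > 2` and `μ₁, …, μ_s ∈ k` be
linearly independent over `𝔽_p`.  Let `(ℤ/p)^s` act on `k[X,Y]` with the `i`-th generator
acting by `Y ↦ Y`, `X ↦ X - μᵢY`.  Then the ring of invariants is `k[φ, Y]`, where
`φ = ∏_{(a₁,…,a_s) ∈ 𝔽_p^s} (X + (a₁μ₁ + ⋯ + a_sμ_s)Y)`. -/
theorem invariants_Zps (p : ℕ) [Fact p.Prime] (hp : Odd p)
    (k : Type*) [Field k] [CharP k p] (s : ℕ) (μ : Fin s → k)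
    (hμ : ∀ c : Fin s → ZMod p,
      ∑ i, ZMod.castHom (dvd_refl p) k (c i) * μ i = 0 → c = 0) :
    (⨅ i : Fin s, AlgHom.equalizer (substAct k (μ i))
        (AlgHom.id k (MvPolynomial (Fin 2) k))) =
      Algebra.adjoin k
        {∏ a : Fin s → ZMod p,
            (X 0 + C (∑ i, ZMod.castHom (dvd_refl p) k (a i) * μ i) * X 1),
         (X 1 : MvPolynomial (Fin 2) k)} :=
  invariants_Zps_general p k s μ hμ
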